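/- Let P(x) = x_1² + ⋯ + x_p² − x_{p+1}² − ⋯ − x_n² on ℝ^n (n = p+q), and let P(x,y) be its polarization (the associated symmetric bilinear form). Define the differential operator D_{s,t} = P(x)P(y)·P(∂_x − ∂_y) + 4s·P(y)·Σ_j x_j(∂_{x_j} − ∂_{y_j}) + 4t·P(x)·Σ_j y_j(∂_{y_j} − ∂_{x_j}) + 2t(2t−2+n)P(x) − 8st·P(x,y) + 2s(2s−2+n)P(y). Then for all smooth f on ℝ^n × ℝ^n and at points where P(x) > 0 and P(y) > 0: P(∂_x − ∂_y)(P(x)^s P(y)^t f(x,y)) = P(x)^{s−1} P(y)^{t−1} (D_{s,t} f)(x,y). -/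

import Mathlib

set_option autoImplicit false

open Complex Finset

/-- The quadratic form `P(x) = x_1² + ⋯ + x_p² − x_{p+1}² − ⋯ − x_n²` on `ℝⁿ`, `n = p+q`. -/
def Ppq (p q : ℕ) (x : Fin (p + q) → ℝ) : ℝ :=
  ∑ j : Fin (p + q), (if (j : ℕ) < p then (1 : ℝ) else -1) * x j ^ 2

/-- The polarization `P(x,y) = ∑_{j≤p} x_j y_j − ∑_{j>p} x_j y_j`. -/
def PpqBil (p q : ℕ) (x y : Fin (p + q) → ℝ) : ℝ :=
  ∑ j : Fin (p + q), (if (j : ℕ) < p then (1 : ℝ) else -1) * x j * y j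

/-- Partial derivative `∂_{x_j}` (first factor) of a function on `ℝⁿ × ℝⁿ`. -/
noncomputable def pdX {n : ℕ} (j : Fin n) (f : (Fin n → ℝ) × (Fin n → ℝ) → ℂ) :
    (Fin n → ℝ) × (Fin n → ℝ) → ℂ :=
  fun z => fderiv ℝ f z (Pi.single j 1, 0)

/-- Partial derivative `∂_{y_j}` (second factor) of a function on `ℝⁿ × ℝⁿ`. -/
noncomputable def pdY {n : ℕ} (j : Fin n) (f : (Fin n → ℝ) × (Fin n → ℝ) → ℂ) :
    (Fin n → ℝ) × (Fin n → ℝ) → ℂ :=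
  fun z => fderiv ℝ f z (0, Pi.single j 1)

/-- The directional derivative `∂_{x_j} − ∂_{y_j}`. -/
noncomputable def pdD {n : ℕ} (j : Fin n) (f : (Fin n → ℝ) × (Fin n → ℝ) → ℂ) :
    (Fin n → ℝ) × (Fin n → ℝ) → ℂ :=
  fun z => fderiv ℝ f z (Pi.single j 1, -Pi.single j 1)

/-- The operator `P(∂_x − ∂_y) = ∑_{j≤p} (∂_{x_j} − ∂_{y_j})² − ∑_{j>p} (∂_{x_j} − ∂_{y_j})²`. -/
noncomputable def PDiffOp (p q : ℕ) (f : (Fin (p + q) → ℝ) × (Fin (p + q) → ℝ) → ℂ) :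
    (Fin (p + q) → ℝ) × (Fin (p + q) → ℝ) → ℂ :=
  fun z => ∑ j : Fin (p + q), (if (j : ℕ) < p then (1 : ℂ) else -1) * pdD j (pdD j f) z

/-- The source operator `D_{s,t}` for the Jordan algebra `ℝ^{p,q}`. -/
noncomputable def Dst (p q : ℕ) (s t : ℂ) (f : (Fin (p + q) → ℝ) × (Fin (p + q) → ℝ) → ℂ) :
    (Fin (p + q) → ℝ) × (Fin (p + q) → ℝ) → ℂ := fun z =>
  (Ppq p q z.1 : ℂ) * (Ppq p q z.2 : ℂ) * PDiffOp p q f z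
    + 4 * s * (Ppq p q z.2 : ℂ) * ∑ j : Fin (p + q), (z.1 j : ℂ) * (pdX j f z - pdY j f z)
    + 4 * t * (Ppq p q z.1 : ℂ) * ∑ j : Fin (p + q), (z.2 j : ℂ) * (pdY j f z - pdX j f z)
    + (2 * t * (2 * t - 2 + (p + q : ℂ)) * (Ppq p q z.1 : ℂ)
        - 8 * s * t * (PpqBil p q z.1 z.2 : ℂ)
        + 2 * s * (2 * s - 2 + (p + q : ℂ)) * (Ppq p q z.2 : ℂ)) * f z


noncomputable def LX (p q : ℕ) (x : Fin (p + q) → ℝ) : (Fin (p + q) → ℝ) →L[ℝ] ℝ :=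
  ∑ j : Fin (p + q), ((if (j : ℕ) < p then (1 : ℝ) else -1) * (2 * x j)) •
    (ContinuousLinearMap.proj j : (Fin (p + q) → ℝ) →L[ℝ] ℝ)

lemma hasFDerivAt_Ppq {p q : ℕ} (x : Fin (p + q) → ℝ) :
    HasFDerivAt (Ppq p q) (LX p q x) x := by
  unfold Ppq LX
  apply HasFDerivAt.fun_sum
  intro j _
  have h1 : HasFDerivAt (fun x : Fin (p+q) → ℝ => x j)
      (ContinuousLinearMap.proj j : (Fin (p+q) → ℝ) →L[ℝ] ℝ) x := by
    exact (ContinuousLinearMap.proj (R := ℝ) (φ := fun _ : Fin (p+q) => ℝ) j).hasFDerivAt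
  have h2 := (h1.fun_mul h1).const_mul (if (j : ℕ) < p then (1:ℝ) else -1)
  simp only [sq]
  refine h2.congr_fderiv ?_
  ext v
  split_ifs <;> simp <;> ring

lemma LX_single {p q : ℕ} (x : Fin (p + q) → ℝ) (i : Fin (p + q)) :
    LX p q x (Pi.single i 1) = (if (i : ℕ) < p then (1 : ℝ) else -1) * (2 * x i) := by
  unfold LX
  rw [ContinuousLinearMap.sum_apply]
  rw [Finset.sum_eq_single i]
  · split_ifs <;> simp
  · intro b _ hb
    split_ifs <;> simp [Pi.single_apply, hb]
  · simp

lemma hasFDerivAt_cpow_comp {E : Type*} [NormedAddCommGroup E] [NormedSpace ℝ E]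
    {g : E → ℝ} {L : E →L[ℝ] ℝ} {w : E} (h : HasFDerivAt g L w) (hg : 0 < g w) (c : ℂ) :
    HasFDerivAt (fun w => ((g w : ℝ) : ℂ) ^ c)
      ((c * ((g w : ℝ) : ℂ) ^ (c - 1)) • (Complex.ofRealCLM.comp L)) w := by
  have h1 : HasFDerivAt (fun w => ((g w : ℝ) : ℂ)) (Complex.ofRealCLM.comp L) w :=
    Complex.ofRealCLM.hasFDerivAt.comp w h
  have h2 : HasDerivAt (fun z : ℂ => z ^ c) (c * ((g w : ℝ) : ℂ) ^ (c - 1)) ((g w : ℝ) : ℂ) :=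
    (Complex.hasStrictDerivAt_cpow_const (Complex.ofReal_mem_slitPlane.2 hg)).hasDerivAt
  have h3 := (h2.hasFDerivAt.restrictScalars ℝ).comp w h1
  exact h3.congr_fderiv (by ext v; simp [mul_comm])

noncomputable def MX (p q : ℕ) (c : ℂ) (w : (Fin (p + q) → ℝ) × (Fin (p + q) → ℝ)) :
    ((Fin (p + q) → ℝ) × (Fin (p + q) → ℝ)) →L[ℝ] ℂ :=
  (c * ((Ppq p q w.1 : ℝ) : ℂ) ^ (c - 1)) •
    (Complex.ofRealCLM.comp ((LX p q w.1).comp (ContinuousLinearMap.fst ℝ _ _)))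

noncomputable def MY (p q : ℕ) (c : ℂ) (w : (Fin (p + q) → ℝ) × (Fin (p + q) → ℝ)) :
    ((Fin (p + q) → ℝ) × (Fin (p + q) → ℝ)) →L[ℝ] ℂ :=
  (c * ((Ppq p q w.2 : ℝ) : ℂ) ^ (c - 1)) •
    (Complex.ofRealCLM.comp ((LX p q w.2).comp (ContinuousLinearMap.snd ℝ _ _)))

lemma hasFDerivAt_PX {p q : ℕ} (c : ℂ) (w : (Fin (p + q) → ℝ) × (Fin (p + q) → ℝ))
    (h : 0 < Ppq p q w.1) :
    HasFDerivAt (fun w : (Fin (p + q) → ℝ) × (Fin (p + q) → ℝ) => ((Ppq p q w.1 : ℝ) : ℂ) ^ c)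
      (MX p q c w) w :=
  hasFDerivAt_cpow_comp ((hasFDerivAt_Ppq w.1).comp w hasFDerivAt_fst) h c

lemma hasFDerivAt_PY {p q : ℕ} (c : ℂ) (w : (Fin (p + q) → ℝ) × (Fin (p + q) → ℝ))
    (h : 0 < Ppq p q w.2) :
    HasFDerivAt (fun w : (Fin (p + q) → ℝ) × (Fin (p + q) → ℝ) => ((Ppq p q w.2 : ℝ) : ℂ) ^ c)
      (MY p q c w) w :=
  hasFDerivAt_cpow_comp ((hasFDerivAt_Ppq w.2).comp w hasFDerivAt_snd) h c

lemma MX_apply {p q : ℕ} (c : ℂ) (w : (Fin (p + q) → ℝ) × (Fin (p + q) → ℝ)) (j : Fin (p + q)) :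
    MX p q c w (Pi.single j 1, -Pi.single j 1)
      = c * ((Ppq p q w.1 : ℝ) : ℂ) ^ (c - 1)
          * ((((if (j : ℕ) < p then (1 : ℝ) else -1) * (2 * w.1 j) : ℝ)) : ℂ) := by
  simp [MX, LX_single, mul_assoc]

lemma MY_apply {p q : ℕ} (c : ℂ) (w : (Fin (p + q) → ℝ) × (Fin (p + q) → ℝ)) (j : Fin (p + q)) :
    MY p q c w (Pi.single j 1, -Pi.single j 1)
      = -(c * ((Ppq p q w.2 : ℝ) : ℂ) ^ (c - 1)
          * ((((if (j : ℕ) < p then (1 : ℝ) else -1) * (2 * w.2 j) : ℝ)) : ℂ)) := by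
  simp [MY, LX_single, mul_assoc]

lemma ite_cast_pm (c : Prop) [Decidable c] :
    (((if c then (1 : ℝ) else -1) : ℝ) : ℂ) = if c then (1 : ℂ) else -1 := by
  split <;> simp

lemma cpow_shift {x : ℂ} (hx : x ≠ 0) (c : ℂ) : x ^ c = x ^ (c - 1) * x := by
  conv_lhs => rw [show c = c - 1 + 1 by ring]
  rw [Complex.cpow_add _ _ hx, Complex.cpow_one]

lemma continuous_Ppq {p q : ℕ} : Continuous (Ppq p q) := by
  unfold Ppq
  exact continuous_finset_sum _ fun j _ => continuous_const.mul ((continuous_apply j).pow 2)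

/-- explicit first derivative of `P(x)^s P(y)^t f` in direction `(e_j, -e_j)`. -/
noncomputable def Efun (p q : ℕ) (s t : ℂ) (f : (Fin (p + q) → ℝ) × (Fin (p + q) → ℝ) → ℂ)
    (j : Fin (p + q)) (w : (Fin (p + q) → ℝ) × (Fin (p + q) → ℝ)) : ℂ :=
  s * ((Ppq p q w.1 : ℝ) : ℂ) ^ (s - 1)
      * (2 * (((if (j : ℕ) < p then (1 : ℝ) else -1) : ℝ) : ℂ) * ((w.1 j : ℝ) : ℂ))
      * (((Ppq p q w.2 : ℝ) : ℂ) ^ t * f w)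
    + t * ((Ppq p q w.2 : ℝ) : ℂ) ^ (t - 1)
      * (-(2 * (((if (j : ℕ) < p then (1 : ℝ) else -1) : ℝ) : ℂ) * ((w.2 j : ℝ) : ℂ)))
      * (((Ppq p q w.1 : ℝ) : ℂ) ^ s * f w)
    + ((Ppq p q w.1 : ℝ) : ℂ) ^ s * ((Ppq p q w.2 : ℝ) : ℂ) ^ t * pdD j f w

lemma pdD_G {p q : ℕ} (s t : ℂ) (f : (Fin (p + q) → ℝ) × (Fin (p + q) → ℝ) → ℂ)
    (hfd : Differentiable ℝ f) (j : Fin (p + q)) (w : (Fin (p + q) → ℝ) × (Fin (p + q) → ℝ))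
    (h1 : 0 < Ppq p q w.1) (h2 : 0 < Ppq p q w.2) :
    pdD j (fun w => ((Ppq p q w.1 : ℝ) : ℂ) ^ s * ((Ppq p q w.2 : ℝ) : ℂ) ^ t * f w) w
      = Efun p q s t f j w := by
  have hG := ((hasFDerivAt_PX s w h1).fun_mul (hasFDerivAt_PY t w h2)).fun_mul (hfd w).hasFDerivAt
  show fderiv ℝ _ w (Pi.single j 1, -Pi.single j 1) = _
  rw [hG.fderiv]
  simp only [ContinuousLinearMap.add_apply, ContinuousLinearMap.smul_apply, smul_eq_mul,
    MX_apply, MY_apply, Efun, pdD]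
  push_cast
  ring

lemma key {p q : ℕ} (s t : ℂ) (f : (Fin (p + q) → ℝ) × (Fin (p + q) → ℝ) → ℂ)
    (hf : ContDiff ℝ (⊤ : ℕ∞) f) (j : Fin (p + q)) (z : (Fin (p + q) → ℝ) × (Fin (p + q) → ℝ))
    (hx : 0 < Ppq p q z.1) (hy : 0 < Ppq p q z.2) :
    (if (j : ℕ) < p then (1 : ℂ) else -1) * pdD j (Efun p q s t f j) z
      = (4 * (s * (s - 1)) * (((Ppq p q z.1 : ℝ) : ℂ) ^ (s - 1 - 1)
            * (((Ppq p q z.2 : ℝ) : ℂ) ^ t * f z)))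
          * ((if (j : ℕ) < p then (1 : ℂ) else -1) * ((z.1 j : ℝ) : ℂ) ^ 2)
        + (2 * s * (((Ppq p q z.1 : ℝ) : ℂ) ^ (s - 1) * (((Ppq p q z.2 : ℝ) : ℂ) ^ t * f z)))
        + (-(8 * (s * t)) * (((Ppq p q z.1 : ℝ) : ℂ) ^ (s - 1)
            * (((Ppq p q z.2 : ℝ) : ℂ) ^ (t - 1) * f z)))
          * ((if (j : ℕ) < p then (1 : ℂ) else -1) * (((z.1 j : ℝ) : ℂ) * ((z.2 j : ℝ) : ℂ)))
        + (4 * s * (((Ppq p q z.1 : ℝ) : ℂ) ^ (s - 1) * ((Ppq p q z.2 : ℝ) : ℂ) ^ t))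
          * (((z.1 j : ℝ) : ℂ) * pdD j f z)
        + (4 * (t * (t - 1)) * (((Ppq p q z.2 : ℝ) : ℂ) ^ (t - 1 - 1)
            * (((Ppq p q z.1 : ℝ) : ℂ) ^ s * f z)))
          * ((if (j : ℕ) < p then (1 : ℂ) else -1) * ((z.2 j : ℝ) : ℂ) ^ 2)
        + (2 * t * (((Ppq p q z.2 : ℝ) : ℂ) ^ (t - 1) * (((Ppq p q z.1 : ℝ) : ℂ) ^ s * f z)))
        + (-(4 * t) * (((Ppq p q z.2 : ℝ) : ℂ) ^ (t - 1) * ((Ppq p q z.1 : ℝ) : ℂ) ^ s))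
          * (((z.2 j : ℝ) : ℂ) * pdD j f z)
        + (((Ppq p q z.1 : ℝ) : ℂ) ^ s * ((Ppq p q z.2 : ℝ) : ℂ) ^ t)
          * ((if (j : ℕ) < p then (1 : ℂ) else -1) * pdD j (pdD j f) z) := by
  have hPX1 := hasFDerivAt_PX (p := p) (q := q) (s - 1) z hx
  have hPXs := hasFDerivAt_PX (p := p) (q := q) s z hx
  have hPY1 := hasFDerivAt_PY (p := p) (q := q) (t - 1) z hy
  have hPYt := hasFDerivAt_PY (p := p) (q := q) t z hy
  have hXj : HasFDerivAt (fun w : (Fin (p + q) → ℝ) × (Fin (p + q) → ℝ) => ((w.1 j : ℝ) : ℂ))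
      (Complex.ofRealCLM.comp
        ((ContinuousLinearMap.proj j : (Fin (p + q) → ℝ) →L[ℝ] ℝ).comp
          (ContinuousLinearMap.fst ℝ _ _))) z := by
    exact (Complex.ofRealCLM.comp
        ((ContinuousLinearMap.proj (R := ℝ) (φ := fun _ : Fin (p + q) => ℝ) j).comp
          (ContinuousLinearMap.fst ℝ (Fin (p + q) → ℝ) (Fin (p + q) → ℝ)))).hasFDerivAt
  have hYj : HasFDerivAt (fun w : (Fin (p + q) → ℝ) × (Fin (p + q) → ℝ) => ((w.2 j : ℝ) : ℂ))
      (Complex.ofRealCLM.comp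
        ((ContinuousLinearMap.proj j : (Fin (p + q) → ℝ) →L[ℝ] ℝ).comp
          (ContinuousLinearMap.snd ℝ _ _))) z := by
    exact (Complex.ofRealCLM.comp
        ((ContinuousLinearMap.proj (R := ℝ) (φ := fun _ : Fin (p + q) => ℝ) j).comp
          (ContinuousLinearMap.snd ℝ (Fin (p + q) → ℝ) (Fin (p + q) → ℝ)))).hasFDerivAt
  have hfz : HasFDerivAt f (fderiv ℝ f z) z := (hf.differentiable (by simp) z).hasFDerivAt
  have hdf : HasFDerivAt (pdD j f) (fderiv ℝ (pdD j f) z) z := by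
    have h1 : ContDiff ℝ (⊤ : ℕ∞) (pdD j f) := by
      unfold pdD
      exact (hf.fderiv_right (by simp)).clm_apply contDiff_const
    exact (h1.differentiable (by simp) z).hasFDerivAt
  have e0 := (((hPX1.const_mul s).fun_mul
        (hXj.const_mul (2 * (((if (j : ℕ) < p then (1 : ℝ) else -1) : ℝ) : ℂ)))).fun_mul
        (hPYt.fun_mul hfz)).fun_add
      (((hPY1.const_mul t).fun_mul
        ((hYj.const_mul (2 * (((if (j : ℕ) < p then (1 : ℝ) else -1) : ℝ) : ℂ))).fun_neg)).fun_mul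
        (hPXs.fun_mul hfz))
  have e1 := e0.fun_add ((hPXs.fun_mul hPYt).fun_mul hdf)
  have hq : pdD j (Efun p q s t f j) z
      = fderiv ℝ (Efun p q s t f j) z (Pi.single j 1, -Pi.single j 1) := rfl
  rw [hq]
  unfold Efun
  rw [e1.fderiv]
  simp only [ContinuousLinearMap.add_apply, ContinuousLinearMap.smul_apply,
    ContinuousLinearMap.neg_apply, ContinuousLinearMap.comp_apply,
    ContinuousLinearMap.proj_apply, ContinuousLinearMap.coe_fst', ContinuousLinearMap.coe_snd',
    MX_apply, MY_apply, Complex.ofRealCLM_apply, smul_eq_mul, Pi.single_eq_same, Pi.neg_apply,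
    Complex.ofReal_neg, Complex.ofReal_one, Complex.ofReal_mul]
  simp only [pdD]
  by_cases hc : (j : ℕ) < p <;>
    simp only [hc, if_true, if_false, Complex.ofReal_one, Complex.ofReal_neg] <;>
    push_cast <;> ring


/-- the intertwining identity defining the operator `D_{s,t}` for
`V = ℝ^{p,q}`: for all smooth `f` on `ℝⁿ × ℝⁿ` and at points where `P(x) > 0` and
`P(y) > 0`,
`P(∂_x − ∂_y)(P(x)^s P(y)^t f(x,y)) = P(x)^{s−1} P(y)^{t−1} (D_{s,t} f)(x,y)`. -/
theorem stmt_11 (p q : ℕ) (hp : 2 ≤ p) (hq : 1 ≤ q) (s t : ℂ)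
    (f : (Fin (p + q) → ℝ) × (Fin (p + q) → ℝ) → ℂ) (hf : ContDiff ℝ (⊤ : ℕ∞) f)
    (z : (Fin (p + q) → ℝ) × (Fin (p + q) → ℝ))
    (hx : 0 < Ppq p q z.1) (hy : 0 < Ppq p q z.2) :
    PDiffOp p q (fun w => (Ppq p q w.1 : ℂ) ^ s * (Ppq p q w.2 : ℂ) ^ t * f w) z
      = (Ppq p q z.1 : ℂ) ^ (s - 1) * (Ppq p q z.2 : ℂ) ^ (t - 1) * Dst p q s t f z := by
  have hfd : Differentiable ℝ f := hf.differentiable (by simp)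
  have hU : IsOpen {w : (Fin (p + q) → ℝ) × (Fin (p + q) → ℝ) |
      0 < Ppq p q w.1 ∧ 0 < Ppq p q w.2} :=
    IsOpen.and (isOpen_lt continuous_const (continuous_Ppq.comp continuous_fst))
      (isOpen_lt continuous_const (continuous_Ppq.comp continuous_snd))
  have hmem : {w : (Fin (p + q) → ℝ) × (Fin (p + q) → ℝ) |
      0 < Ppq p q w.1 ∧ 0 < Ppq p q w.2} ∈ nhds z := hU.mem_nhds ⟨hx, hy⟩
  have h2 : ∀ j : Fin (p + q),
      pdD j (pdD j (fun w => (Ppq p q w.1 : ℂ) ^ s * (Ppq p q w.2 : ℂ) ^ t * f w)) z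
        = pdD j (Efun p q s t f j) z := by
    intro j
    have heq : pdD j (fun w => (Ppq p q w.1 : ℂ) ^ s * (Ppq p q w.2 : ℂ) ^ t * f w)
        =ᶠ[nhds z] Efun p q s t f j :=
      Filter.eventuallyEq_of_mem hmem fun w hw => pdD_G s t f hfd j w hw.1 hw.2
    show fderiv ℝ (pdD j (fun w => (Ppq p q w.1 : ℂ) ^ s * (Ppq p q w.2 : ℂ) ^ t * f w)) z
        (Pi.single j 1, -Pi.single j 1)
      = fderiv ℝ (Efun p q s t f j) z (Pi.single j 1, -Pi.single j 1)
    rw [heq.fderiv_eq]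
  have h4 := Finset.sum_congr (rfl : (univ : Finset (Fin (p + q))) = univ)
    (fun j (_ : j ∈ univ) => key s t f hf j z hx hy)
  have hsplit : ∀ j : Fin (p + q), pdD j f z = pdX j f z - pdY j f z := by
    intro j
    unfold pdD pdX pdY
    rw [show ((Pi.single j 1 : Fin (p + q) → ℝ), -(Pi.single j 1 : Fin (p + q) → ℝ))
        = ((Pi.single j 1 : Fin (p + q) → ℝ), (0 : Fin (p + q) → ℝ))
          + -((0 : Fin (p + q) → ℝ), (Pi.single j 1 : Fin (p + q) → ℝ)) by
      simp [Prod.ext_iff]]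
    rw [map_add, map_neg]
    ring
  have hx0 : ((Ppq p q z.1 : ℝ) : ℂ) ≠ 0 := Complex.ofReal_ne_zero.2 (ne_of_gt hx)
  have hy0 : ((Ppq p q z.2 : ℝ) : ℂ) ≠ 0 := Complex.ofReal_ne_zero.2 (ne_of_gt hy)
  have hS1 : ∑ j : Fin (p + q), (if (j : ℕ) < p then (1 : ℂ) else -1) * ((z.1 j : ℝ) : ℂ) ^ 2
      = ((Ppq p q z.1 : ℝ) : ℂ) := by
    rw [Ppq]
    push_cast
    exact Finset.sum_congr rfl fun j _ => by split_ifs <;> push_cast <;> ring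
  have hS2 : ∑ j : Fin (p + q), (if (j : ℕ) < p then (1 : ℂ) else -1) * ((z.2 j : ℝ) : ℂ) ^ 2
      = ((Ppq p q z.2 : ℝ) : ℂ) := by
    rw [Ppq]
    push_cast
    exact Finset.sum_congr rfl fun j _ => by split_ifs <;> push_cast <;> ring
  have hS3 : ∑ j : Fin (p + q), (if (j : ℕ) < p then (1 : ℂ) else -1)
        * (((z.1 j : ℝ) : ℂ) * ((z.2 j : ℝ) : ℂ))
      = ((PpqBil p q z.1 z.2 : ℝ) : ℂ) := by
    rw [PpqBil]
    push_cast
    exact Finset.sum_congr rfl fun j _ => by split_ifs <;> push_cast <;> ring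
  have hT2 : ∑ j : Fin (p + q), ((z.2 j : ℝ) : ℂ) * (pdY j f z - pdX j f z)
      = -∑ j : Fin (p + q), ((z.2 j : ℝ) : ℂ) * (pdX j f z - pdY j f z) := by
    rw [← Finset.sum_neg_distrib]
    exact Finset.sum_congr rfl fun j _ => by ring
  unfold PDiffOp
  simp only [h2]
  rw [h4]
  unfold Dst PDiffOp
  simp only [hsplit, hT2]
  simp only [Finset.sum_add_distrib, ← Finset.mul_sum, Finset.sum_const, Finset.card_univ,
    Fintype.card_fin, nsmul_eq_mul]
  rw [hS1, hS2, hS3]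
  rw [cpow_shift hx0 s, cpow_shift hx0 (s - 1), cpow_shift hy0 t, cpow_shift hy0 (t - 1)]
  push_cast
  ring
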